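/- For each n, let (Y_{n,i}, X_{n,i}), i = 1, …, n, be i.i.d. pairs in ℝ × ℝ^p with ε_{n,i} = Y_{n,i} − G(X_{n,i}) satisfying E(ε_{n,i} | X_{n,i}) = 0 and E(ε_{n,i}² | X_{n,i}) = σ², where G is continuously differentiable with gradient G′ satisfying |G′(x)|₂ ≤ C_G on the (compact) support of X_{n,1}. Let G̃′_n be a sequence of (random) estimators of G′ such that, for some sequence r_n → 0, (1/n) Σ_{i=1}^n |G̃′_n(X_{n,i}) − G′(X_{n,i})|₂ = O_P(r_n) and (1/n) Σ_{i=1}^n |G̃′_n(X_{n,i}) − G′(X_{n,i})|₂² = O_P(r_n²). Define Σ_G = E[G′(X_{n,1}) G′(X_{n,1})ᵀ] and Σ̃_G = (1/n) Σ_{i=1}^n G̃′_n(X_{n,i}) G̃′_n(X_{n,i})ᵀ. Then ‖Σ̃_G − Σ_G‖ = O_P(r_n + n^{-1/2}). -/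

import Mathlib

open MeasureTheory ProbabilityTheory Matrix Filter

/-- Spectral norm (largest singular value) of a real matrix. -/
noncomputable def specNorm {m n : Type*} [Fintype m] [Fintype n] [DecidableEq n]
    (A : Matrix m n ℝ) : ℝ :=
  ‖LinearMap.toContinuousLinearMap (Matrix.toEuclideanLin A)‖

/-- Euclidean norm of a vector. -/
noncomputable def vnorm {ι : Type*} [Fintype ι] (v : ι → ℝ) : ℝ :=
  Real.sqrt (∑ i, (v i) ^ 2)

/-- Entrywise expectation of a random matrix. -/
noncomputable def matExp {Ω : Type*} [MeasurableSpace Ω] (μ : MeasureTheory.Measure Ω)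
    {m n : Type*} (f : Ω → Matrix m n ℝ) : Matrix m n ℝ :=
  Matrix.of fun i j => ∫ ω, f ω i j ∂μ

/-- `Z n = O_P(a n)`: stochastic boundedness at the rate `a n`. -/
def IsBigOP {Ω : ℕ → Type*} [∀ n, MeasurableSpace (Ω n)] (μ : ∀ n, MeasureTheory.Measure (Ω n))
    (Z : ∀ n, Ω n → ℝ) (a : ℕ → ℝ) : Prop :=
  ∀ δ : ℝ, 0 < δ → ∃ M : ℝ, ∃ N : ℕ, ∀ n ≥ N, μ n {ω | M * a n < |Z n ω|} ≤ ENNReal.ofReal δ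

/-!
Write `t_i = G'(X_i) + d_i` for the estimated gradients. Then
`t_i t_iᵀ - G'(X_i) G'(X_i)ᵀ = d_i d_iᵀ + d_i G'(X_i)ᵀ + G'(X_i) d_iᵀ`, and a rank-one matrix
`a bᵀ` has operator norm at most `|a|₂ |b|₂`, so the estimation error contributes at most
`(1/n) Σ |d_i|₂² + 2 C_G (1/n) Σ |d_i|₂ = O_P(r_n² + r_n)`. What remains is
`(1/n) Σ G'(X_i) G'(X_i)ᵀ - Σ_G`, a centred mean of `n` independent bounded matrices: by
Chebyshev's inequality each entry is `O_P(n^{-1/2})`, and the operator norm is at most the sum of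
the absolute values of the entries.
-/

open scoped Matrix.Norms.L2Operator

theorem vnorm_nonneg {ι : Type*} [Fintype ι] (v : ι → ℝ) : 0 ≤ vnorm v :=
  Real.sqrt_nonneg _

theorem vnorm_eq_norm {ι : Type*} [Fintype ι] (v : ι → ℝ) :
    vnorm v = ‖WithLp.toLp 2 v‖ := by
  simp [vnorm, EuclideanSpace.norm_eq]

theorem vnorm_single {ι : Type*} [Fintype ι] [DecidableEq ι] (i : ι) (c : ℝ) :
    vnorm (Pi.single i c) = |c| := by
  rw [vnorm_eq_norm, PiLp.toLp_single, PiLp.norm_single, Real.norm_eq_abs]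

theorem abs_le_vnorm {ι : Type*} [Fintype ι] (v : ι → ℝ) (j : ι) : |v j| ≤ vnorm v := by
  rw [← Real.sqrt_sq_eq_abs]
  exact Real.sqrt_le_sqrt (Finset.single_le_sum (f := fun i => v i ^ 2)
    (fun i _ => sq_nonneg _) (Finset.mem_univ j))

theorem abs_mul_apply_le_vnorm_sq {ι : Type*} [Fintype ι] (v : ι → ℝ) (j k : ι) :
    |v j * v k| ≤ vnorm v ^ 2 := by
  rw [abs_mul, sq]
  exact mul_le_mul (abs_le_vnorm v j) (abs_le_vnorm v k) (abs_nonneg _) (vnorm_nonneg v)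

theorem specNorm_eq_norm {m n : Type*} [Fintype m] [Fintype n] [DecidableEq n]
    (A : Matrix m n ℝ) : specNorm A = ‖A‖ := rfl

namespace Matrix

variable {m n : Type*} [Fintype m] [Fintype n] [DecidableEq n]

theorem l2_opNorm_vecMulVec_le (a : m → ℝ) (b : n → ℝ) :
    ‖vecMulVec a b‖ ≤ vnorm a * vnorm b := by
  rw [l2_opNorm_def, vnorm_eq_norm, vnorm_eq_norm]
  refine ContinuousLinearMap.opNorm_le_bound _ (by positivity) fun x => ?_
  have hx : (toEuclideanLin.trans LinearMap.toContinuousLinearMap (vecMulVec a b)) x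
      = inner ℝ (WithLp.toLp 2 b) x • WithLp.toLp 2 a := by
    ext i
    simp [toLpLin_apply, vecMulVec_mulVec, EuclideanSpace.inner_eq_star_dotProduct, dotProduct_comm]
  rw [hx, norm_smul, Real.norm_eq_abs, mul_comm, mul_assoc]
  exact mul_le_mul_of_nonneg_left (abs_real_inner_le_norm _ _) (norm_nonneg _)

theorem l2_opNorm_le_sum_abs [DecidableEq m] (A : Matrix m n ℝ) : ‖A‖ ≤ ∑ i, ∑ j, |A i j| := by
  conv_lhs => rw [matrix_eq_sum_single A]
  refine (norm_sum_le _ _).trans (Finset.sum_le_sum fun i _ => (norm_sum_le _ _).trans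
    (Finset.sum_le_sum fun j _ => ?_))
  calc ‖single i j (A i j)‖ = |A i j| * ‖vecMulVec (Pi.single i 1) (Pi.single j (1 : ℝ))‖ := by
        rw [← single_eq_single_vecMulVec_single, ← Real.norm_eq_abs, ← norm_smul, smul_single,
          smul_eq_mul, mul_one]
    _ ≤ |A i j| * (vnorm (Pi.single i 1) * vnorm (Pi.single j (1 : ℝ))) :=
        mul_le_mul_of_nonneg_left (l2_opNorm_vecMulVec_le _ _) (abs_nonneg _)
    _ = |A i j| := by simp [vnorm_single]

theorem l2_opNorm_vecMulVec_self_sub_le (t v : n → ℝ) :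
    ‖vecMulVec t t - vecMulVec v v‖ ≤ vnorm (t - v) ^ 2 + 2 * vnorm v * vnorm (t - v) := by
  have hsplit : vecMulVec t t - vecMulVec v v
      = vecMulVec (t - v) (t - v) + vecMulVec (t - v) v + vecMulVec v (t - v) := by
    simp only [sub_vecMulVec, vecMulVec_sub]; abel
  rw [hsplit]
  refine (norm_add₃_le).trans ?_
  have h1 := l2_opNorm_vecMulVec_le (t - v) (t - v)
  have h2 := l2_opNorm_vecMulVec_le (t - v) v
  have h3 := l2_opNorm_vecMulVec_le v (t - v)
  linarith

theorem l2_opNorm_smul_sum_vecMulVec_sub_le {ι : Type*} [Fintype ι] {c B : ℝ} (hc : 0 ≤ c)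
    (t v : ι → n → ℝ) (hv : ∀ i, vnorm (v i) ≤ B) (S : Matrix n n ℝ) :
    ‖c • ∑ i, vecMulVec (t i) (t i) - S‖ ≤ c * ∑ i, vnorm (t i - v i) ^ 2 +
      2 * B * (c * ∑ i, vnorm (t i - v i)) + ‖c • ∑ i, vecMulVec (v i) (v i) - S‖ := by
  have hsplit : c • ∑ i, vecMulVec (t i) (t i) - S =
      c • ∑ i, (vecMulVec (t i) (t i) - vecMulVec (v i) (v i)) +
        (c • ∑ i, vecMulVec (v i) (v i) - S) := by
    rw [Finset.sum_sub_distrib, smul_sub]; abel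
  have hterm : ∀ i, ‖vecMulVec (t i) (t i) - vecMulVec (v i) (v i)‖ ≤
      vnorm (t i - v i) ^ 2 + 2 * B * vnorm (t i - v i) := fun i =>
    (l2_opNorm_vecMulVec_self_sub_le (t i) (v i)).trans (by
      gcongr
      exacts [vnorm_nonneg _, hv i])
  rw [hsplit]
  refine (norm_add_le _ _).trans (add_le_add_left ?_ _)
  calc ‖c • ∑ i, (vecMulVec (t i) (t i) - vecMulVec (v i) (v i))‖
      ≤ c * ∑ i, (vnorm (t i - v i) ^ 2 + 2 * B * vnorm (t i - v i)) := by
        rw [norm_smul, Real.norm_of_nonneg hc]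
        exact mul_le_mul_of_nonneg_left
          ((norm_sum_le _ _).trans (Finset.sum_le_sum fun i _ => hterm i)) hc
    _ = c * ∑ i, vnorm (t i - v i) ^ 2 + 2 * B * (c * ∑ i, vnorm (t i - v i)) := by
        rw [Finset.sum_add_distrib, ← Finset.mul_sum]; ring

end Matrix

section SampleMean

variable {Ω : Type*} [MeasurableSpace Ω] {μ : Measure Ω}

theorem variance_mean_le {n : ℕ} {W : Fin n → Ω → ℝ} {V : ℝ} (hW : ∀ i, MemLp (W i) 2 μ)
    (hindep : Pairwise fun i j => W i ⟂ᵢ[μ] W j) (hvar : ∀ i, variance (W i) μ ≤ V) :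
    variance (fun ω => (n : ℝ)⁻¹ * ∑ i, W i ω) μ ≤ V / n := by
  have hsmul : (fun ω => (n : ℝ)⁻¹ * ∑ i, W i ω) = (n : ℝ)⁻¹ • ∑ i, W i := by
    ext ω; simp [Finset.sum_apply]
  rw [hsmul, variance_smul, IndepFun.variance_sum (fun i _ => hW i) fun i _ j _ hij => hindep hij]
  calc (n : ℝ)⁻¹ ^ 2 * ∑ i, variance (W i) μ ≤ (n : ℝ)⁻¹ ^ 2 * ∑ _i : Fin n, V :=
        mul_le_mul_of_nonneg_left (Finset.sum_le_sum fun i _ => hvar i) (sq_nonneg _)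
    _ = V / n := by
        rcases eq_or_ne (n : ℝ) 0 with hn | hn
        · simp [hn]
        · simp only [Finset.sum_const, Finset.card_univ, Fintype.card_fin, nsmul_eq_mul]
          field_simp

theorem variance_le_sq_of_abs_le [IsProbabilityMeasure μ] {X : Ω → ℝ} {B : ℝ}
    (hX : AEMeasurable X μ) (hB : ∀ᵐ ω ∂μ, |X ω| ≤ B) : variance X μ ≤ B ^ 2 := by
  have := variance_le_sq_of_bounded (hB.mono fun ω hω => abs_le.mp hω) hX
  rwa [sub_neg_eq_add, ← two_mul, mul_div_cancel_left₀ _ two_ne_zero] at this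

end SampleMean

namespace IsBigOP

variable {Ω : ℕ → Type*} [∀ n, MeasurableSpace (Ω n)] {μ : ∀ n, Measure (Ω n)}
  {Z W : ∀ n, Ω n → ℝ} {a b : ℕ → ℝ}

theorem of_abs_le (h : ∀ n, ∀ᵐ ω ∂μ n, |Z n ω| ≤ |W n ω|) (hW : IsBigOP μ W a) :
    IsBigOP μ Z a := by
  intro δ hδ
  obtain ⟨M, N, hMN⟩ := hW δ hδ
  refine ⟨M, N, fun n hn => (measure_mono_ae ?_).trans (hMN n hn)⟩
  filter_upwards [h n] with ω hω hlt
  exact hlt.trans_le hω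

theorem abs (hZ : IsBigOP μ Z a) : IsBigOP μ (fun n ω => |Z n ω|) a :=
  of_abs_le (fun _ => ae_of_all _ fun _ => (abs_abs _).le) hZ

theorem mono_rate (hZ : IsBigOP μ Z a) (hab : ∀ᶠ n in atTop, 0 ≤ a n ∧ a n ≤ b n) :
    IsBigOP μ Z b := by
  intro δ hδ
  obtain ⟨M, N, hMN⟩ := hZ δ hδ
  obtain ⟨N', hN'⟩ := eventually_atTop.1 hab
  refine ⟨|M|, max N N', fun n hn => (measure_mono fun ω hω => ?_).trans
    (hMN n (le_of_max_le_left hn))⟩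
  obtain ⟨ha, hle⟩ := hN' n (le_of_max_le_right hn)
  calc M * a n ≤ |M| * b n := mul_le_mul (le_abs_self M) hle ha (abs_nonneg M)
    _ < |Z n ω| := hω

theorem const_mul (c : ℝ) (ha : ∀ n, 0 ≤ a n) (hZ : IsBigOP μ Z a) :
    IsBigOP μ (fun n ω => c * Z n ω) a := by
  intro δ hδ
  obtain ⟨M, N, hMN⟩ := hZ δ hδ
  refine ⟨|c| * |M|, N, fun n hn => (measure_mono fun ω hω => ?_).trans (hMN n hn)⟩
  rw [Set.mem_ofPred_eq] at hω ⊢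
  contrapose! hω
  calc |c * Z n ω| = |c| * |Z n ω| := abs_mul c _
    _ ≤ |c| * (|M| * a n) :=
        mul_le_mul_of_nonneg_left (hω.trans (mul_le_mul_of_nonneg_right (le_abs_self M) (ha n)))
          (abs_nonneg c)
    _ = |c| * |M| * a n := (mul_assoc _ _ _).symm

theorem add (ha : ∀ n, 0 ≤ a n) (hZ : IsBigOP μ Z a) (hW : IsBigOP μ W a) :
    IsBigOP μ (fun n ω => Z n ω + W n ω) a := by
  intro δ hδ
  obtain ⟨M₁, N₁, h₁⟩ := hZ (δ / 2) (half_pos hδ)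
  obtain ⟨M₂, N₂, h₂⟩ := hW (δ / 2) (half_pos hδ)
  refine ⟨|M₁| + |M₂|, max N₁ N₂, fun n hn => ?_⟩
  have hsub : {ω | (|M₁| + |M₂|) * a n < |Z n ω + W n ω|} ⊆
      {ω | M₁ * a n < |Z n ω|} ∪ {ω | M₂ * a n < |W n ω|} := by
    intro ω hω
    rw [Set.mem_ofPred_eq] at hω
    rw [Set.mem_union]
    by_contra! ⟨hZ, hW⟩
    have hZ' := (not_lt.mp hZ).trans (mul_le_mul_of_nonneg_right (le_abs_self M₁) (ha n))
    have hW' := (not_lt.mp hW).trans (mul_le_mul_of_nonneg_right (le_abs_self M₂) (ha n))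
    have := (abs_add_le (Z n ω) (W n ω)).trans (add_le_add hZ' hW')
    linarith
  calc μ n {ω | (|M₁| + |M₂|) * a n < |Z n ω + W n ω|}
      ≤ μ n {ω | M₁ * a n < |Z n ω|} + μ n {ω | M₂ * a n < |W n ω|} :=
        (measure_mono hsub).trans (measure_union_le _ _)
    _ ≤ ENNReal.ofReal (δ / 2) + ENNReal.ofReal (δ / 2) :=
        add_le_add (h₁ n (le_of_max_le_left hn)) (h₂ n (le_of_max_le_right hn))
    _ = ENNReal.ofReal δ := by rw [← ENNReal.ofReal_add (by linarith) (by linarith), add_halves]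

theorem zero (ha : ∀ n, 0 ≤ a n) : IsBigOP μ (fun _ _ => 0) a :=
  fun _ _ => ⟨1, 0, fun n _ => by simp [(ha n).not_gt]⟩

theorem finset_sum {ι : Type*} (s : Finset ι) {Z : ι → ∀ n, Ω n → ℝ} (ha : ∀ n, 0 ≤ a n)
    (hZ : ∀ i ∈ s, IsBigOP μ (Z i) a) : IsBigOP μ (fun n ω => ∑ i ∈ s, Z i n ω) a := by
  classical
  induction s using Finset.induction_on with
  | empty => simpa using zero ha
  | insert k s hk ih =>
    simp only [Finset.sum_insert hk]
    exact add ha (hZ k (s.mem_insert_self k))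
      (ih fun i hi => hZ i (Finset.mem_insert_of_mem hi))

theorem of_variance_le [∀ n, IsFiniteMeasure (μ n)] {c : ℕ → ℝ} (K : ℝ)
    (h : ∀ᶠ n in atTop, MemLp (Z n) 2 (μ n) ∧ (μ n)[Z n] = c n ∧ 0 < a n ∧
      variance (Z n) (μ n) ≤ K * a n ^ 2) :
    IsBigOP μ (fun n ω => Z n ω - c n) a := by
  intro δ hδ
  obtain ⟨M, hM, hKM⟩ : ∃ M > 0, K ≤ δ * M ^ 2 := by
    refine ⟨Real.sqrt (|K| / δ) + 1, by positivity, ?_⟩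
    have hsq := Real.sq_sqrt (div_nonneg (abs_nonneg K) hδ.le)
    have hKδ : |K| = δ * (|K| / δ) := by field_simp
    nlinarith [le_abs_self K, Real.sqrt_nonneg (|K| / δ)]
  obtain ⟨N, hN⟩ := eventually_atTop.1 h
  refine ⟨M, N, fun n hn => ?_⟩
  obtain ⟨hZ, hmean, ha, hvar⟩ := hN n hn
  calc μ n {ω | M * a n < |Z n ω - c n|}
      ≤ μ n {ω | M * a n ≤ |Z n ω - (μ n)[Z n]|} :=
        measure_mono fun ω hω => by
          rw [Set.mem_ofPred_eq] at hω ⊢; rw [hmean]; exact hω.le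
    _ ≤ ENNReal.ofReal (variance (Z n) (μ n) / (M * a n) ^ 2) :=
        meas_ge_le_variance_div_sq hZ (by positivity)
    _ ≤ ENNReal.ofReal δ := by
        refine ENNReal.ofReal_le_ofReal (div_le_of_le_mul₀ (by positivity) hδ.le ?_)
        calc variance (Z n) (μ n) ≤ K * a n ^ 2 := hvar
          _ ≤ δ * M ^ 2 * a n ^ 2 := mul_le_mul_of_nonneg_right hKM (sq_nonneg _)
          _ = δ * (M * a n) ^ 2 := by ring

section Probability

variable [∀ n, IsProbabilityMeasure (μ n)]

theorem mean_sub {W : ∀ n, Fin n → Ω n → ℝ} {m B : ℝ} (hW : ∀ n i, AEMeasurable (W n i) (μ n))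
    (hB : ∀ n i, ∀ᵐ ω ∂μ n, |W n i ω| ≤ B)
    (hmean : ∀ n i, (μ n)[W n i] = m) (hindep : ∀ n, Pairwise fun i j => W n i ⟂ᵢ[μ n] W n j) :
    IsBigOP μ (fun n ω => (n : ℝ)⁻¹ * ∑ i, W n i ω - m) (fun n => (Real.sqrt n)⁻¹) := by
  refine of_variance_le (Z := fun n ω => (n : ℝ)⁻¹ * ∑ i, W n i ω) (B ^ 2) ?_
  filter_upwards [eventually_ge_atTop 1] with n hn
  have hn' : (0 : ℝ) < n := by exact_mod_cast hn
  have hL2 : ∀ i, MemLp (W n i) 2 (μ n) := fun i =>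
    MemLp.of_bound (hW n i).aestronglyMeasurable B (by simpa using hB n i)
  refine ⟨?_, ?_, by positivity, ?_⟩
  · exact (memLp_finsetSum _ fun i _ => hL2 i).const_mul _
  · rw [integral_const_mul, integral_finsetSum _ fun i _ => (hL2 i).integrable one_le_two]
    simp only [hmean, Finset.sum_const, Finset.card_univ, Fintype.card_fin, nsmul_eq_mul]
    field_simp
  · calc variance (fun ω => (n : ℝ)⁻¹ * ∑ i, W n i ω) (μ n) ≤ B ^ 2 / n :=
          variance_mean_le hL2 (hindep n) fun i => variance_le_sq_of_abs_le (hW n i) (hB n i)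
      _ = B ^ 2 * (Real.sqrt n)⁻¹ ^ 2 := by rw [inv_pow, Real.sq_sqrt hn'.le, div_eq_mul_inv]

theorem norm_mean_vecMulVec_sub {κ : Type*} [Fintype κ] [DecidableEq κ]
    {V : ∀ n, Fin n → Ω n → κ → ℝ} {B : ℝ} {S : Matrix κ κ ℝ}
    (hV : ∀ n i, Measurable (V n i)) (hB : ∀ n i, ∀ᵐ ω ∂μ n, vnorm (V n i ω) ≤ B)
    (hmean : ∀ n i, matExp (μ n) (fun ω => vecMulVec (V n i ω) (V n i ω)) = S)
    (hindep : ∀ n, Pairwise fun i j => V n i ⟂ᵢ[μ n] V n j) :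
    IsBigOP μ (fun n ω => ‖(n : ℝ)⁻¹ • ∑ i, vecMulVec (V n i ω) (V n i ω) - S‖)
      (fun n => (Real.sqrt n)⁻¹) := by
  have ha : ∀ n : ℕ, 0 ≤ (Real.sqrt n)⁻¹ := fun n => by positivity
  have hentry : ∀ j k, IsBigOP μ
      (fun n ω => (n : ℝ)⁻¹ * ∑ i, V n i ω j * V n i ω k - S j k) (fun n => (Real.sqrt n)⁻¹) := by
    intro j k
    have hjk : Measurable fun v : κ → ℝ => v j * v k :=
      (measurable_pi_apply j).mul (measurable_pi_apply k)
    refine mean_sub (B := B ^ 2) (fun n i => (hjk.comp (hV n i)).aemeasurable)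
      (fun n i => ?_) (fun n i => ?_) fun n i i' hii' => (hindep n hii').comp hjk hjk
    · filter_upwards [hB n i] with ω hω
      exact (abs_mul_apply_le_vnorm_sq _ j k).trans (pow_le_pow_left₀ (vnorm_nonneg _) hω 2)
    · simpa [matExp, vecMulVec_apply] using congr_fun₂ (hmean n i) j k
  refine of_abs_le (fun n => ae_of_all _ fun ω => ?_)
    (finset_sum Finset.univ ha fun j _ => finset_sum Finset.univ ha fun k _ => (hentry j k).abs)
  rw [abs_of_nonneg (norm_nonneg _)]
  refine (l2_opNorm_le_sum_abs _).trans (le_of_eq_of_le ?_ (le_abs_self _))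
  simp [vecMulVec_apply, Matrix.sum_apply]

end Probability

end IsBigOP

theorem opg_matrix_rate_general
    {Ω : ℕ → Type*} [∀ n, MeasurableSpace (Ω n)]
    (μ : ∀ n, MeasureTheory.Measure (Ω n)) [∀ n, IsProbabilityMeasure (μ n)]
    (p : ℕ)
    (X : ∀ n, Fin n → Ω n → (Fin p → ℝ)) (Y : ∀ n, Fin n → Ω n → ℝ)
    (hX : ∀ n i, Measurable (X n i))
    (hindep : ∀ n, iIndepFun (fun i ω => (Y n i ω, X n i ω)) (μ n))
    -- the regression function, its gradient, and the conditional error moments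
    (G : (Fin p → ℝ) → ℝ) (G' : (Fin p → ℝ) → (Fin p → ℝ))
    (hGsmooth : ContDiff ℝ 1 G)
    (hG' : ∀ x j, G' x j = fderiv ℝ G x (Pi.single j 1))
    -- the true gradient is bounded on the support of the covariates
    (CG : ℝ)
    (hCG : ∀ n i, ∀ᵐ ω ∂μ n, vnorm (G' (X n i ω)) ≤ CG)
    -- the gradient estimators and their accuracy
    (tG : ∀ n, Ω n → (Fin p → ℝ) → (Fin p → ℝ))
    (r : ℕ → ℝ) (hrpos : ∀ n, 0 ≤ r n) (hr : Tendsto r atTop (nhds 0))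
    (hOP1 : IsBigOP μ (fun n ω =>
      (n : ℝ)⁻¹ * ∑ i, vnorm (fun j => tG n ω (X n i ω) j - G' (X n i ω) j)) r)
    (hOP2 : IsBigOP μ (fun n ω =>
      (n : ℝ)⁻¹ * ∑ i, (vnorm (fun j => tG n ω (X n i ω) j - G' (X n i ω) j)) ^ 2)
      (fun n => (r n) ^ 2))
    -- the population and empirical outer-product-of-gradients matrices
    (SigG : Matrix (Fin p) (Fin p) ℝ)
    (hSigG : ∀ n (i : Fin n),
      matExp (μ n) (fun ω => Matrix.vecMulVec (G' (X n i ω)) (G' (X n i ω))) = SigG) :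
    IsBigOP μ (fun n ω => specNorm
        ((n : ℝ)⁻¹ • ∑ i, Matrix.vecMulVec (tG n ω (X n i ω)) (tG n ω (X n i ω)) - SigG))
      (fun n => r n + (Real.sqrt n)⁻¹) := by
  have ha : ∀ n : ℕ, 0 ≤ r n + (Real.sqrt n)⁻¹ := fun n => add_nonneg (hrpos n) (by positivity)
  have hG'meas : Measurable G' := by
    refine (continuous_pi fun j => ?_).measurable
    simp_rw [hG']
    exact (hGsmooth.continuous_fderiv one_ne_zero).clm_apply continuous_const
  have hfluct := IsBigOP.norm_mean_vecMulVec_sub (V := fun n i ω => G' (X n i ω))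
    (fun n i => hG'meas.comp (hX n i)) hCG hSigG
    fun n i j hij => ((hindep n).indepFun hij).comp (hG'meas.comp measurable_snd)
      (hG'meas.comp measurable_snd)
  have hr2 : ∀ᶠ n in atTop, 0 ≤ r n ^ 2 ∧ r n ^ 2 ≤ r n + (Real.sqrt n)⁻¹ := by
    filter_upwards [hr.eventually_le_const zero_lt_one] with n hn
    exact ⟨sq_nonneg _, by nlinarith [hrpos n, inv_nonneg.2 (Real.sqrt_nonneg n)]⟩
  have hr1 : ∀ᶠ n in atTop, 0 ≤ r n ∧ r n ≤ r n + (Real.sqrt n)⁻¹ :=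
    .of_forall fun n => ⟨hrpos n, le_add_of_nonneg_right (by positivity)⟩
  have hr0 : ∀ᶠ n : ℕ in atTop, 0 ≤ (Real.sqrt n)⁻¹ ∧ (Real.sqrt n)⁻¹ ≤ r n + (Real.sqrt n)⁻¹ :=
    .of_forall fun n => ⟨by positivity, le_add_of_nonneg_left (hrpos n)⟩
  refine IsBigOP.of_abs_le (fun n => ?_) (((hOP2.mono_rate hr2).add ha
    ((hOP1.mono_rate hr1).const_mul (2 * CG) ha)).add ha (hfluct.mono_rate hr0))
  filter_upwards [ae_all_iff.2 (hCG n)] with ω hω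
  rw [specNorm_eq_norm, abs_of_nonneg (norm_nonneg _)]
  exact (Matrix.l2_opNorm_smul_sum_vecMulVec_sub_le (by positivity) _ _ hω SigG).trans
    (le_abs_self _)

/-- **Theorem 1(ii) of the paper** (convergence of the outer-product-of-gradients
estimator): if the estimated gradients are accurate at the rate `r n` in averaged first
and second moments, and the true gradient is bounded, then
`‖Σ̃_G − Σ_G‖ = O_P(r n + n^{-1/2})`. -/
theorem opg_matrix_rate
    {Ω : ℕ → Type*} [∀ n, MeasurableSpace (Ω n)]
    (μ : ∀ n, MeasureTheory.Measure (Ω n)) [∀ n, IsProbabilityMeasure (μ n)]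
    (p : ℕ)
    (X : ∀ n, Fin n → Ω n → (Fin p → ℝ)) (Y : ∀ n, Fin n → Ω n → ℝ)
    (hX : ∀ n i, Measurable (X n i)) (hY : ∀ n i, Measurable (Y n i))
    (hindep : ∀ n, iIndepFun (fun i ω => (Y n i ω, X n i ω)) (μ n))
    (hident : ∀ n i j,
      IdentDistrib (fun ω => (Y n i ω, X n i ω)) (fun ω => (Y n j ω, X n j ω)) (μ n) (μ n))
    -- the regression function, its gradient, and the conditional error moments
    (G : (Fin p → ℝ) → ℝ) (G' : (Fin p → ℝ) → (Fin p → ℝ))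
    (hGsmooth : ContDiff ℝ 1 G)
    (hG' : ∀ x j, G' x j = fderiv ℝ G x (Pi.single j 1))
    (σ2 : ℝ)
    (hmean : ∀ n i,
      (μ n)[fun ω => Y n i ω - G (X n i ω) | MeasurableSpace.comap (X n i) inferInstance]
        =ᵐ[μ n] fun _ => 0)
    (hvar : ∀ n i,
      (μ n)[fun ω => (Y n i ω - G (X n i ω)) ^ 2 | MeasurableSpace.comap (X n i) inferInstance]
        =ᵐ[μ n] fun _ => σ2)
    -- the true gradient is bounded on the support of the covariates
    (CG : ℝ)
    (hCG : ∀ n i, ∀ᵐ ω ∂μ n, vnorm (G' (X n i ω)) ≤ CG)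
    -- the gradient estimators and their accuracy
    (tG : ∀ n, Ω n → (Fin p → ℝ) → (Fin p → ℝ))
    (r : ℕ → ℝ) (hrpos : ∀ n, 0 ≤ r n) (hr : Tendsto r atTop (nhds 0))
    (hOP1 : IsBigOP μ (fun n ω =>
      (n : ℝ)⁻¹ * ∑ i, vnorm (fun j => tG n ω (X n i ω) j - G' (X n i ω) j)) r)
    (hOP2 : IsBigOP μ (fun n ω =>
      (n : ℝ)⁻¹ * ∑ i, (vnorm (fun j => tG n ω (X n i ω) j - G' (X n i ω) j)) ^ 2)
      (fun n => (r n) ^ 2))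
    -- the population and empirical outer-product-of-gradients matrices
    (SigG : Matrix (Fin p) (Fin p) ℝ)
    (hSigG : ∀ n (i : Fin n),
      matExp (μ n) (fun ω => Matrix.vecMulVec (G' (X n i ω)) (G' (X n i ω))) = SigG) :
    IsBigOP μ (fun n ω => specNorm
        ((n : ℝ)⁻¹ • ∑ i, Matrix.vecMulVec (tG n ω (X n i ω)) (tG n ω (X n i ω)) - SigG))
      (fun n => r n + (Real.sqrt n)⁻¹) :=
  opg_matrix_rate_general μ p X Y hX hindep G G' hGsmooth hG' CG hCG tG r hrpos hr hOP1 hOP2 SigG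
    hSigG
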